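/- Fix 2 ≤ k ≤ n and let (M_t)_{t≥0} be the k-PM random walk on M_n started at id_n. Let P_t := P(M_t) be the induced partition chain, π_M the uniform distribution on M_n, and π_P the pushforward of π_M under the map η ↦ P(η). Then for every t ≥ 0, TV(law(M_t), π_M) = TV(law(P_t), π_P). -/

import Mathlib

open scoped Classical

noncomputable section

/-- A perfect matching on `2n` objects, encoded as a fixed-point-free involution of
`Fin n × Bool`; the element `(i, b)` encodes the object `2i+1` (if `b = false`)
or `2i+2` (if `b = true`) of `{1, …, 2n}`. The pairs of the matching are the orbits. -/
abbrev PM (n : ℕ) : Type :=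
  {σ : Equiv.Perm (Fin n × Bool) // Function.Involutive ⇑σ ∧ ∀ x, σ x ≠ x}

/-- The identity matching `id_n = {{1,2},…,{2n-1,2n}}`. -/
def idPM (n : ℕ) : PM n :=
  ⟨⟨fun x => (x.1, !x.2), fun x => (x.1, !x.2), fun x => by simp, fun x => by simp⟩,
    fun x => by simp, fun x => by simp [Prod.ext_iff]⟩

/-- The (simple graph underlying the) multigraph with edge multiset `η ⊎ μ`. -/
def matchGraph {n : ℕ} (η μ : PM n) : SimpleGraph (Fin n × Bool) where
  Adj x y := x ≠ y ∧ (η.1 x = y ∨ μ.1 x = y)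
  symm := ⟨by
    rintro x y ⟨hne, h | h⟩
    · exact ⟨hne.symm, Or.inl (by rw [← h]; exact η.2.1 x)⟩
    · exact ⟨hne.symm, Or.inr (by rw [← h]; exact μ.2.1 x)⟩⟩
  loopless := ⟨by rintro x ⟨hne, -⟩; exact hne rfl⟩

/-- `cycleCount η μ ℓ` is the number of connected components of size `2ℓ`
of the multigraph `η ⊎ μ`; `cycleCount η (idPM n)` is the cycle structure `C(η)`. -/
def cycleCount {n : ℕ} (η μ : PM n) (ℓ : ℕ) : ℕ :=
  Nat.card {c : (matchGraph η μ).ConnectedComponent // Nat.card c.supp = 2 * ℓ}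

/-- Total variation distance, `max_A |μ(A) - ν(A)|`. -/
def TV {Ω : Type*} (μ ν : Ω → ℝ) : ℝ :=
  ⨆ A : Finset Ω, |∑ x ∈ A, μ x - ∑ x ∈ A, ν x|

/-- Pushforward of a (finitely supported) distribution along a map. -/
def push {Ω : Type*} [Fintype Ω] {S : Type*} (f : Ω → S) (μ : Ω → ℝ) : S → ℝ :=
  fun s => ∑ x ∈ Finset.univ.filter (fun x => f x = s), μ x

/-- The `η`-invariant subsets of size `2k`, i.e. the unions of `k` pairs of `η`. -/
def invSets {n : ℕ} (η : PM n) (k : ℕ) : Finset (Finset (Fin n × Bool)) :=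
  Finset.univ.filter fun T => T.card = 2 * k ∧ ∀ x ∈ T, η.1 x ∈ T

/-- `Compat η T η'` : the matching `η'` agrees with `η` outside `T` and matches
the elements of `T` among themselves. -/
def Compat {n : ℕ} (η : PM n) (T : Finset (Fin n × Bool)) (η' : PM n) : Prop :=
  (∀ x, x ∉ T → η'.1 x = η.1 x) ∧ ∀ x ∈ T, η'.1 x ∈ T

/-- One-step transition kernel of the `k`-PM random walk: choose `k` pairs of `η`
uniformly (i.e. an `η`-invariant set `T` of size `2k`) and rematch the `2k` covered
elements by an independent uniform perfect matching of them. -/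
def kernel (n k : ℕ) (η η' : PM n) : ℝ :=
  (∑ T ∈ invSets η k,
      if Compat η T η' then ((Finset.univ.filter fun η'' : PM n => Compat η T η'').card : ℝ)⁻¹
      else 0) / ((invSets η k).card : ℝ)

/-- Law at time `t` of the `k`-PM random walk started at `η₀`. -/
def pmLaw (n k : ℕ) (η₀ : PM n) : ℕ → PM n → ℝ
  | 0 => fun η => if η = η₀ then 1 else 0
  | t + 1 => fun η => ∑ η' : PM n, pmLaw n k η₀ t η' * kernel n k η' η

/-- The uniform distribution on `PM n`. -/
def unifPM (n : ℕ) : PM n → ℝ := fun _ => (Fintype.card (PM n) : ℝ)⁻¹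

section TVlemmas
variable {Ω S : Type*} [Fintype Ω] (f : Ω → S) (μ ν : Ω → ℝ)

lemma push_sum (A : Finset S) :
    ∑ s ∈ A, push f μ s = ∑ x ∈ Finset.univ.filter (fun x => f x ∈ A), μ x := by
  simpa [push] using Finset.sum_fiberwise_eq_sum_filter Finset.univ A f μ

lemma tv_abs_le (A : Finset Ω) :
    |∑ x ∈ A, μ x - ∑ x ∈ A, ν x| ≤ ∑ x : Ω, |μ x - ν x| := by
  rw [← Finset.sum_sub_distrib]
  refine (Finset.abs_sum_le_sum_abs _ _).trans ?_
  exact Finset.sum_le_sum_of_subset_of_nonneg (Finset.subset_univ A)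
    (fun _ _ _ => abs_nonneg _)

lemma tv_bdd : BddAbove (Set.range fun A : Finset Ω => |∑ x ∈ A, μ x - ∑ x ∈ A, ν x|) := by
  refine ⟨∑ x : Ω, |μ x - ν x|, ?_⟩
  rintro r ⟨A, rfl⟩
  exact tv_abs_le μ ν A

lemma tv_push_bdd :
    BddAbove (Set.range fun A : Finset S =>
      |∑ s ∈ A, push f μ s - ∑ s ∈ A, push f ν s|) := by
  refine ⟨∑ x : Ω, |μ x - ν x|, ?_⟩
  rintro r ⟨A, rfl⟩
  simpa [push_sum f μ, push_sum f ν] using tv_abs_le μ ν (Finset.univ.filter (fun x => f x ∈ A))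

lemma TV_push_le : TV (push f μ) (push f ν) ≤ TV μ ν := by
  refine ciSup_le fun A => ?_
  rw [push_sum, push_sum]
  exact le_ciSup (tv_bdd μ ν) _

lemma fiber_filter_image (P : Finset Ω) (hP : ∀ x y, f x = f y → (x ∈ P ↔ y ∈ P)) :
    Finset.univ.filter (fun x => f x ∈ P.image f) = P := by
  ext x
  simp only [Finset.mem_filter, Finset.mem_univ, true_and, Finset.mem_image]
  constructor
  · rintro ⟨y, hy, hxy⟩
    exact (hP y x hxy).1 hy
  · intro hx; exact ⟨x, hx, rfl⟩

lemma TV_le_push (hconst : ∀ x y, f x = f y → μ x - ν x = μ y - ν y) :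
    TV μ ν ≤ TV (push f μ) (push f ν) := by
  have hsum : ∀ P : Finset Ω, (∀ x y, f x = f y → (x ∈ P ↔ y ∈ P)) →
      ∑ s ∈ P.image f, push f μ s - ∑ s ∈ P.image f, push f ν s
        = ∑ x ∈ P, (μ x - ν x) := by
    intro P hP
    rw [push_sum, push_sum, fiber_filter_image f P hP, Finset.sum_sub_distrib]
  refine ciSup_le fun A => abs_le.2 ⟨?_, ?_⟩
  · -- -(TV push) ≤ ∑_A δ : use the negative part N
    set N : Finset Ω := Finset.univ.filter (fun x => μ x - ν x < 0) with hNdef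
    have hNmem : ∀ x, x ∈ N ↔ μ x - ν x < 0 := by
      intro x; simp [hNdef]
    have hP : ∀ x y, f x = f y → (x ∈ N ↔ y ∈ N) := by
      intro x y hxy; rw [hNmem, hNmem, hconst x y hxy]
    have h1 : ∑ x ∈ N, (μ x - ν x) ≤ ∑ x ∈ A, μ x - ∑ x ∈ A, ν x := by
      rw [← Finset.sum_sub_distrib]
      have e1 : ∑ x ∈ A, (μ x - ν x)
          = ∑ x ∈ A.filter (fun x => μ x - ν x < 0), (μ x - ν x)
            + ∑ x ∈ A.filter (fun x => ¬ μ x - ν x < 0), (μ x - ν x) :=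
        (Finset.sum_filter_add_sum_filter_not A _ _).symm
      have e2 : (0:ℝ) ≤ ∑ x ∈ A.filter (fun x => ¬ μ x - ν x < 0), (μ x - ν x) :=
        Finset.sum_nonneg fun x hx => le_of_not_gt (Finset.mem_filter.1 hx).2
      have e3 : ∑ x ∈ N, (μ x - ν x) ≤
          ∑ x ∈ A.filter (fun x => μ x - ν x < 0), (μ x - ν x) := by
        have := Finset.sum_le_sum_of_subset_of_nonneg
          (f := fun x => -(μ x - ν x))
          (Finset.filter_subset_filter _ (Finset.subset_univ A))
          (fun x hx _ => by
            have h := (hNmem x).1 hx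
            simpa using le_of_lt (neg_pos.2 h))
        simp only [Finset.sum_neg_distrib] at this
        have hN' : Finset.univ.filter (fun x => μ x - ν x < 0) = N := rfl
        rw [hN'] at this
        linarith
      linarith
    have h2 := hsum N hP
    have h3 : -|∑ s ∈ N.image f, push f μ s - ∑ s ∈ N.image f, push f ν s|
        ≤ ∑ s ∈ N.image f, push f μ s - ∑ s ∈ N.image f, push f ν s :=
      neg_abs_le _
    have h4 : |∑ s ∈ N.image f, push f μ s - ∑ s ∈ N.image f, push f ν s|
        ≤ TV (push f μ) (push f ν) := le_ciSup (tv_push_bdd f μ ν) _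
    have h5 : -TV (push f μ) (push f ν)
        ≤ ∑ s ∈ N.image f, push f μ s - ∑ s ∈ N.image f, push f ν s :=
      (neg_le_neg h4).trans h3
    rw [h2] at h5
    linarith
  · set P : Finset Ω := Finset.univ.filter (fun x => 0 < μ x - ν x) with hPdef
    have hPmem : ∀ x, x ∈ P ↔ 0 < μ x - ν x := by
      intro x; simp [hPdef]
    have hP : ∀ x y, f x = f y → (x ∈ P ↔ y ∈ P) := by
      intro x y hxy; rw [hPmem, hPmem, hconst x y hxy]
    have h1 : ∑ x ∈ A, μ x - ∑ x ∈ A, ν x ≤ ∑ x ∈ P, (μ x - ν x) := by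
      rw [← Finset.sum_sub_distrib]
      have e1 : ∑ x ∈ A, (μ x - ν x)
          = ∑ x ∈ A.filter (fun x => 0 < μ x - ν x), (μ x - ν x)
            + ∑ x ∈ A.filter (fun x => ¬ 0 < μ x - ν x), (μ x - ν x) :=
        (Finset.sum_filter_add_sum_filter_not A _ _).symm
      have e2 : ∑ x ∈ A.filter (fun x => ¬ 0 < μ x - ν x), (μ x - ν x) ≤ 0 :=
        Finset.sum_nonpos fun x hx => le_of_not_gt (Finset.mem_filter.1 hx).2
      have e3 : ∑ x ∈ A.filter (fun x => 0 < μ x - ν x), (μ x - ν x)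
          ≤ ∑ x ∈ P, (μ x - ν x) := by
        refine Finset.sum_le_sum_of_subset_of_nonneg
          (Finset.filter_subset_filter _ (Finset.subset_univ A)) ?_
        intro x hx _
        exact le_of_lt ((hPmem x).1 hx)
      linarith
    have h2 := hsum P hP
    have h3 : ∑ s ∈ P.image f, push f μ s - ∑ s ∈ P.image f, push f ν s
        ≤ |∑ s ∈ P.image f, push f μ s - ∑ s ∈ P.image f, push f ν s| := le_abs_self _
    have h4 : |∑ s ∈ P.image f, push f μ s - ∑ s ∈ P.image f, push f ν s|
        ≤ TV (push f μ) (push f ν) := le_ciSup (tv_push_bdd f μ ν) _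
    have h5 : ∑ s ∈ P.image f, push f μ s - ∑ s ∈ P.image f, push f ν s
        ≤ TV (push f μ) (push f ν) := h3.trans h4
    rw [h2] at h5
    linarith

lemma TV_push_eq (hconst : ∀ x y, f x = f y → μ x - ν x = μ y - ν y) :
    TV μ ν = TV (push f μ) (push f ν) :=
  le_antisymm (TV_le_push f μ ν hconst) (TV_push_le f μ ν)

end TVlemmas
/-- `d_n(t)`: worst-case (over the starting matching) total variation distance to
uniformity at time `t` for the `k`-PM random walk. -/
def dTV (n k t : ℕ) : ℝ := ⨆ η₀ : PM n, TV (pmLaw n k η₀ t) (unifPM n)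

/-- The swap graph: two matchings are adjacent if one is obtained from the other by
a single swap (rematching two of its pairs differently). -/
def swapGraph (n : ℕ) : SimpleGraph (PM n) where
  Adj η η' := η ≠ η' ∧ ∃ T : Finset (Fin n × Bool), T.card = 4 ∧
    (∀ x ∈ T, η.1 x ∈ T) ∧ (∀ x ∈ T, η'.1 x ∈ T) ∧ ∀ x, x ∉ T → η.1 x = η'.1 x
  symm := ⟨by
    rintro η η' ⟨hne, T, hT, h1, h2, h3⟩
    exact ⟨hne.symm, T, hT, h2, h1, fun x hx => (h3 x hx).symm⟩⟩
  loopless := ⟨fun η h => h.1 rfl⟩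


/-- The integer partition `P(η)` of `n` associated with `η ∈ M_n`: the multiset of the
halved sizes of the connected components of the multigraph `η ⊎ id_n`, listed in
non-increasing order. -/
def partitionOf {n : ℕ} (η : PM n) : List ℕ :=
  letI : Fintype (matchGraph η (idPM n)).ConnectedComponent := Fintype.ofFinite _
  (((Finset.univ : Finset ((matchGraph η (idPM n)).ConnectedComponent)).val.map
      fun c => Nat.card c.supp / 2).sort (· ≤ ·)).reverse
section Conj
variable {n : ℕ}

/-- Conjugation of a matching by a permutation. -/
def conjPM (g : Equiv.Perm (Fin n × Bool)) (η : PM n) : PM n :=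
  ⟨g * η.1 * g⁻¹,
   fun x => by
     simp only [Equiv.Perm.mul_apply, Equiv.Perm.coe_inv, Equiv.symm_apply_apply]
     rw [η.2.1]
     exact g.apply_symm_apply x,
   fun x hx => by
     simp only [Equiv.Perm.mul_apply] at hx
     have : η.1 (g⁻¹ x) = g⁻¹ x := by
       have := congrArg (⇑g⁻¹) hx
       simpa using this
     exact η.2.2 _ this⟩

lemma conjPM_conjPM (g : Equiv.Perm (Fin n × Bool)) (η : PM n) :
    conjPM g⁻¹ (conjPM g η) = η := by
  apply Subtype.ext
  simp only [conjPM]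
  group

lemma conjPM_inv_conjPM (g : Equiv.Perm (Fin n × Bool)) (η : PM n) :
    conjPM g (conjPM g⁻¹ η) = η := by
  simpa using conjPM_conjPM g⁻¹ η

/-- Conjugation as an equivalence on matchings. -/
def conjPMEquiv (g : Equiv.Perm (Fin n × Bool)) : PM n ≃ PM n where
  toFun := conjPM g
  invFun := conjPM g⁻¹
  left_inv := conjPM_conjPM g
  right_inv := conjPM_inv_conjPM g

lemma conjPM_apply (g : Equiv.Perm (Fin n × Bool)) (η : PM n) (x : Fin n × Bool) :
    (conjPM g η).1 x = g (η.1 (g⁻¹ x)) := rfl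

lemma image_inv_image (g : Equiv.Perm (Fin n × Bool)) (T : Finset (Fin n × Bool)) :
    (T.image ⇑g).image ⇑g⁻¹ = T := by
  rw [Finset.image_image]
  have h : (⇑g⁻¹ ∘ ⇑g) = id := funext fun x => g.symm_apply_apply x
  rw [h, Finset.image_id]

lemma compat_conj (g : Equiv.Perm (Fin n × Bool)) (η η' : PM n)
    (T : Finset (Fin n × Bool)) (h : Compat η T η') :
    Compat (conjPM g η) (T.image ⇑g) (conjPM g η') := by
  obtain ⟨h1, h2⟩ := h
  constructor
  · intro x hx
    have hgx : g⁻¹ x ∉ T := by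
      intro hmem
      exact hx (Finset.mem_image.2 ⟨g⁻¹ x, hmem, g.apply_symm_apply x⟩)
    rw [conjPM_apply, conjPM_apply, h1 _ hgx]
  · intro x hx
    obtain ⟨y, hy, rfl⟩ := Finset.mem_image.1 hx
    rw [conjPM_apply]
    simp only [Equiv.Perm.coe_inv, Equiv.symm_apply_apply]
    exact Finset.mem_image.2 ⟨η'.1 y, h2 y hy, rfl⟩

lemma compat_conj_iff (g : Equiv.Perm (Fin n × Bool)) (η η' : PM n)
    (T : Finset (Fin n × Bool)) :
    Compat (conjPM g η) (T.image ⇑g) (conjPM g η') ↔ Compat η T η' := by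
  constructor
  · intro h
    have := compat_conj g⁻¹ _ _ _ h
    rw [conjPM_conjPM, conjPM_conjPM, image_inv_image] at this
    exact this
  · exact compat_conj g η η' T

lemma invSets_conj (g : Equiv.Perm (Fin n × Bool)) (η : PM n) (k : ℕ) :
    invSets (conjPM g η) k = (invSets η k).image (Finset.image ⇑g) := by
  ext T'
  simp only [invSets, Finset.mem_filter, Finset.mem_univ, true_and, Finset.mem_image]
  constructor
  · rintro ⟨hcard, hclosed⟩
    refine ⟨T'.image ⇑g⁻¹, ⟨?_, ?_⟩, ?_⟩
    · rwa [Finset.card_image_of_injective _ g⁻¹.injective]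
    · intro x hx
      obtain ⟨y, hy, rfl⟩ := Finset.mem_image.1 hx
      have := hclosed y hy
      rw [conjPM_apply] at this
      refine Finset.mem_image.2 ⟨g (η.1 (g⁻¹ y)), this, ?_⟩
      simp
    · rw [Finset.image_image]
      have h : (⇑g ∘ ⇑g⁻¹) = id := funext fun x => g.apply_symm_apply x
      rw [h, Finset.image_id]
  · rintro ⟨T, ⟨hcard, hclosed⟩, rfl⟩
    refine ⟨by rwa [Finset.card_image_of_injective _ g.injective], ?_⟩
    intro x hx
    obtain ⟨y, hy, rfl⟩ := Finset.mem_image.1 hx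
    rw [conjPM_apply]
    simp only [Equiv.Perm.coe_inv, Equiv.symm_apply_apply]
    exact Finset.mem_image.2 ⟨η.1 y, hclosed y hy, rfl⟩

lemma compat_card_conj (g : Equiv.Perm (Fin n × Bool)) (η : PM n)
    (T : Finset (Fin n × Bool)) :
    (Finset.univ.filter fun η'' : PM n => Compat (conjPM g η) (T.image ⇑g) η'').card
      = (Finset.univ.filter fun η'' : PM n => Compat η T η'').card := by
  refine Finset.card_bij' (fun η'' _ => conjPM g⁻¹ η'') (fun η'' _ => conjPM g η'')
    ?_ ?_ ?_ ?_
  · intro a ha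
    simp only [Finset.mem_filter, Finset.mem_univ, true_and] at ha ⊢
    rw [← conjPM_inv_conjPM g a] at ha
    exact (compat_conj_iff g η (conjPM g⁻¹ a) T).1 ha
  · intro a ha
    simp only [Finset.mem_filter, Finset.mem_univ, true_and] at ha ⊢
    exact (compat_conj_iff g η a T).2 ha
  · intro a _; exact conjPM_inv_conjPM g a
  · intro a _; exact conjPM_conjPM g a

lemma kernel_conj (g : Equiv.Perm (Fin n × Bool)) (k : ℕ) (η η' : PM n) :
    kernel n k (conjPM g η) (conjPM g η') = kernel n k η η' := by
  unfold kernel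
  rw [invSets_conj]
  have himg : ((invSets η k).image (Finset.image ⇑g)).card = (invSets η k).card :=
    Finset.card_image_of_injective _ (Finset.image_injective g.injective)
  rw [himg]
  congr 1
  rw [Finset.sum_image (fun a _ b _ hab => Finset.image_injective g.injective hab)]
  apply Finset.sum_congr rfl
  intro T _
  rw [compat_card_conj g η T]
  by_cases h : Compat η T η'
  · rw [if_pos h, if_pos ((compat_conj_iff g η η' T).2 h)]
  · rw [if_neg h, if_neg (fun hc => h ((compat_conj_iff g η η' T).1 hc))]

lemma pmLaw_conj (g : Equiv.Perm (Fin n × Bool)) (k : ℕ) (η₀ : PM n) (t : ℕ) (η : PM n) :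
    pmLaw n k (conjPM g η₀) t (conjPM g η) = pmLaw n k η₀ t η := by
  induction t generalizing η with
  | zero =>
    simp only [pmLaw]
    by_cases h : η = η₀
    · rw [if_pos (by rw [h]), if_pos h]
    · rw [if_neg (fun hc => h (by
        have := congrArg (conjPM g⁻¹) hc
        rwa [conjPM_conjPM, conjPM_conjPM] at this)), if_neg h]
  | succ t ih =>
    simp only [pmLaw]
    rw [← Equiv.sum_comp (conjPMEquiv g)
      (fun η' => pmLaw n k (conjPM g η₀) t η' * kernel n k η' (conjPM g η))]
    apply Finset.sum_congr rfl
    intro η' _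
    have h1 : (conjPMEquiv g) η' = conjPM g η' := rfl
    rw [h1, ih η', kernel_conj]

end Conj
section Orbit
variable {n : ℕ}

/-- Shorthand for the identity involution. -/
def iot (n : ℕ) : Equiv.Perm (Fin n × Bool) := (idPM n).1

lemma iot_invol (x : Fin n × Bool) : iot n (iot n x) = x := (idPM n).2.1 x
lemma iot_ne (x : Fin n × Bool) : iot n x ≠ x := (idPM n).2.2 x

lemma perm_inv_of_invol {α : Type*} (σ : Equiv.Perm α) (h : Function.Involutive ⇑σ) :
    σ⁻¹ = σ := by
  have h1 : σ * σ = 1 := by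
    apply Equiv.ext; intro x; exact h x
  exact inv_eq_of_mul_eq_one_right h1

/-- The composition `η ∘ ι` whose cycles describe the components of `η ⊎ id`. -/
def cperm (η : PM n) : Equiv.Perm (Fin n × Bool) := η.1 * iot n

lemma cperm_apply (η : PM n) (x : Fin n × Bool) : cperm η x = η.1 (iot n x) := rfl

lemma iot_inv : (iot n)⁻¹ = iot n := perm_inv_of_invol _ (idPM n).2.1

lemma eta_inv (η : PM n) : (η.1)⁻¹ = η.1 := perm_inv_of_invol _ η.2.1

lemma cperm_inv (η : PM n) : (cperm η)⁻¹ = iot n * η.1 := by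
  rw [cperm, mul_inv_rev, iot_inv, eta_inv]

/-- `ι c ι⁻¹ = c⁻¹`. -/
lemma iot_conj_cperm (η : PM n) : iot n * cperm η * (iot n)⁻¹ = (cperm η)⁻¹ := by
  rw [iot_inv, cperm_inv, cperm]
  apply Equiv.ext; intro x
  simp only [Equiv.Perm.mul_apply]
  rw [iot_invol]

lemma iot_conj_zpow (η : PM n) (m : ℤ) :
    iot n * (cperm η) ^ m * (iot n)⁻¹ = (cperm η) ^ (-m) := by
  have h2 : (MulAut.conj (iot n)) (cperm η) = (cperm η)⁻¹ := by
    simp only [MulAut.conj_apply]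
    exact iot_conj_cperm η
  calc iot n * (cperm η) ^ m * (iot n)⁻¹
      = (MulAut.conj (iot n)) ((cperm η) ^ m) := by simp [MulAut.conj_apply]
    _ = ((MulAut.conj (iot n)) (cperm η)) ^ m := map_zpow _ _ _
    _ = ((cperm η)⁻¹) ^ m := by rw [h2]
    _ = (cperm η) ^ (-m) := by rw [inv_zpow, zpow_neg]

lemma iot_zpow_apply (η : PM n) (m : ℤ) (x : Fin n × Bool) :
    iot n (((cperm η) ^ m) x) = ((cperm η) ^ (-m)) (iot n x) := by
  have h := congrArg (fun σ : Equiv.Perm (Fin n × Bool) => σ (iot n x)) (iot_conj_zpow η m)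
  simp only [Equiv.Perm.mul_apply, iot_inv] at h
  rw [iot_invol] at h
  exact h

lemma zpow_iot_apply (η : PM n) (m : ℤ) (x : Fin n × Bool) :
    ((cperm η) ^ m) (iot n x) = iot n (((cperm η) ^ (-m)) x) := by
  rw [iot_zpow_apply, neg_neg]

lemma eta_zpow_apply (η : PM n) (m : ℤ) (x : Fin n × Bool) :
    η.1 (((cperm η) ^ m) x) = iot n (((cperm η) ^ (m - 1)) x) := by
  have h : η.1 = iot n * (cperm η)⁻¹ := by
    rw [cperm_inv]
    apply Equiv.ext; intro y
    simp only [Equiv.Perm.mul_apply]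
    rw [iot_invol]
  rw [h]
  simp only [Equiv.Perm.mul_apply]
  congr 1
  calc (cperm η)⁻¹ (((cperm η) ^ m) x) = ((cperm η)⁻¹ * (cperm η) ^ m) x := rfl
    _ = ((cperm η) ^ (m - 1)) x := by
        rw [← zpow_neg_one, ← zpow_add]
        congr 2
        ring

lemma eta_iot_zpow_apply (η : PM n) (m : ℤ) (x : Fin n × Bool) :
    η.1 (iot n (((cperm η) ^ m) x)) = ((cperm η) ^ (m + 1)) x := by
  have h1 : η.1 (iot n (((cperm η) ^ m) x)) = cperm η (((cperm η) ^ m) x) := rfl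
  rw [h1]
  have h2 : ((cperm η) ^ (1:ℤ) * (cperm η) ^ m) x = cperm η (((cperm η) ^ m) x) := by
    rw [zpow_one]; rfl
  rw [← h2, ← zpow_add]
  congr 2
  ring

lemma zpow_zpow_apply (η : PM n) (a b : ℤ) (x : Fin n × Bool) :
    ((cperm η) ^ a) (((cperm η) ^ b) x) = ((cperm η) ^ (a + b)) x := by
  calc ((cperm η) ^ a) (((cperm η) ^ b) x) = (((cperm η) ^ a) * ((cperm η) ^ b)) x := rfl
    _ = ((cperm η) ^ (a + b)) x := by rw [← zpow_add]

/-- KEY parity fact: `ι x` is never on the `c`-orbit of `x`. -/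
lemma iot_not_on_orbit (η : PM n) (x : Fin n × Bool) (m : ℤ) :
    ((cperm η) ^ m) x ≠ iot n x := by
  intro hm
  rcases Int.even_or_odd m with ⟨j, hj⟩ | ⟨j, hj⟩
  · have : iot n (((cperm η) ^ j) x) = ((cperm η) ^ j) x := by
      rw [iot_zpow_apply, ← hm, zpow_zpow_apply]
      congr 2
      omega
    exact iot_ne _ this
  · have : η.1 (((cperm η) ^ (j+1)) x) = ((cperm η) ^ (j+1)) x := by
      rw [eta_zpow_apply]
      have h1 : (j + 1 - 1 : ℤ) = j := by ring
      rw [h1, iot_zpow_apply, ← hm, zpow_zpow_apply]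
      congr 2
      omega
    exact η.2.2 _ this

/-- Reachability step: `x` reaches `c x`. -/
lemma reach_c (η : PM n) (x : Fin n × Bool) :
    (matchGraph η (idPM n)).Reachable x (cperm η x) := by
  have h1 : (matchGraph η (idPM n)).Adj x (iot n x) :=
    ⟨(iot_ne x).symm, Or.inr rfl⟩
  have h2 : (matchGraph η (idPM n)).Adj (iot n x) (cperm η x) := by
    refine ⟨?_, Or.inl rfl⟩
    intro hc
    exact η.2.2 (iot n x) (by rw [← cperm_apply, hc])
  exact h1.reachable.trans h2.reachable

lemma reach_iot (η : PM n) (x : Fin n × Bool) :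
    (matchGraph η (idPM n)).Reachable x (iot n x) :=
  (SimpleGraph.Adj.reachable ⟨(iot_ne x).symm, Or.inr rfl⟩)

lemma reach_zpow (η : PM n) (m : ℤ) (x : Fin n × Bool) :
    (matchGraph η (idPM n)).Reachable x (((cperm η) ^ m) x) := by
  induction m using Int.induction_on with
  | zero => simpa using SimpleGraph.Reachable.refl x
  | succ i ih =>
    have h : cperm η (((cperm η) ^ (i:ℤ)) x) = ((cperm η) ^ ((i:ℤ) + 1)) x := by
      have h2 := zpow_zpow_apply η 1 (i:ℤ) x
      rw [zpow_one] at h2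
      rw [h2]
      congr 1
      ring
    rw [← h]
    exact ih.trans (reach_c η _)
  | pred i ih =>
    have key : (matchGraph η (idPM n)).Reachable (((cperm η) ^ (-(i:ℤ) - 1)) x)
        (((cperm η) ^ (-(i:ℤ))) x) := by
      have h : cperm η (((cperm η) ^ (-(i:ℤ) - 1)) x) = ((cperm η) ^ (-(i:ℤ))) x := by
        have := zpow_zpow_apply η 1 (-(i:ℤ) - 1) x
        rw [zpow_one] at this
        rw [this]
        congr 1
        ring
      rw [← h]
      exact reach_c η _
    exact ih.trans key.symm

lemma orbit_trans (η : PM n) {x u y : Fin n × Bool}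
    (hu : ∃ a : ℤ, u = ((cperm η) ^ a) x ∨ u = iot n (((cperm η) ^ a) x))
    (hy : ∃ m : ℤ, y = ((cperm η) ^ m) u ∨ y = iot n (((cperm η) ^ m) u)) :
    ∃ m : ℤ, y = ((cperm η) ^ m) x ∨ y = iot n (((cperm η) ^ m) x) := by
  obtain ⟨a, ha | ha⟩ := hu <;> obtain ⟨m, hm | hm⟩ := hy
  · exact ⟨m + a, Or.inl (by rw [hm, ha, zpow_zpow_apply])⟩
  · exact ⟨m + a, Or.inr (by rw [hm, ha, zpow_zpow_apply])⟩
  · refine ⟨a - m, Or.inr ?_⟩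
    rw [hm, ha, zpow_iot_apply, zpow_zpow_apply]
    congr 2
    ring
  · refine ⟨a - m, Or.inl ?_⟩
    rw [hm, ha, zpow_iot_apply, iot_invol, zpow_zpow_apply]
    congr 2
    ring

lemma orbit_closed (η : PM n) (x : Fin n × Bool) {u v : Fin n × Bool}
    (h : (matchGraph η (idPM n)).Adj u v)
    (hu : ∃ m : ℤ, u = ((cperm η) ^ m) x ∨ u = iot n (((cperm η) ^ m) x)) :
    ∃ m : ℤ, v = ((cperm η) ^ m) x ∨ v = iot n (((cperm η) ^ m) x) := by
  obtain ⟨m, hm | hm⟩ := hu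
  · rcases h.2 with hv | hv
    · exact ⟨m - 1, Or.inr (by rw [← hv, hm, eta_zpow_apply])⟩
    · refine ⟨m, Or.inr ?_⟩
      rw [← hv, hm]
      rfl
  · rcases h.2 with hv | hv
    · exact ⟨m + 1, Or.inl (by rw [← hv, hm, eta_iot_zpow_apply])⟩
    · refine ⟨m, Or.inl ?_⟩
      rw [← hv, hm]
      show iot n (iot n _) = _
      rw [iot_invol]

lemma mem_orbit_of_reachable (η : PM n) {x y : Fin n × Bool}
    (h : (matchGraph η (idPM n)).Reachable x y) :
    ∃ m : ℤ, y = ((cperm η) ^ m) x ∨ y = iot n (((cperm η) ^ m) x) := by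
  obtain ⟨w⟩ := h
  induction w with
  | nil => exact ⟨0, Or.inl (by simp)⟩
  | @cons a b c hab p ih =>
    exact orbit_trans η (orbit_closed η a hab ⟨0, Or.inl (by simp)⟩) ih

end Orbit
section Fib
variable {n : ℕ}

lemma zfix {α : Type*} (σ : Equiv.Perm α) {x : α} (h : σ x = x) (q : ℤ) :
    (σ ^ q) x = x := by
  have hinv : σ⁻¹ x = x := by
    conv_lhs => rw [← h]
    exact σ.symm_apply_apply x
  induction q using Int.induction_on with
  | zero => simp
  | succ i ih =>
    rw [zpow_add_one]
    show (σ ^ (i:ℤ)) (σ x) = x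
    rw [h]; exact ih
  | pred i ih =>
    rw [zpow_sub_one]
    show (σ ^ (-(i:ℤ))) (σ⁻¹ x) = x
    rw [hinv]; exact ih

/-- A chosen base point of a connected component. -/
def basep (η : PM n) (K : (matchGraph η (idPM n)).ConnectedComponent) : Fin n × Bool :=
  K.exists_rep.choose

lemma basep_spec (η : PM n) (K : (matchGraph η (idPM n)).ConnectedComponent) :
    (matchGraph η (idPM n)).connectedComponentMk (basep η K) = K :=
  K.exists_rep.choose_spec

/-- Half the size of a component: the `c`-period of its base point. -/
def len (η : PM n) (K : (matchGraph η (idPM n)).ConnectedComponent) : ℕ :=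
  Function.minimalPeriod ⇑(cperm η) (basep η K)

lemma len_pos (η : PM n) (K : (matchGraph η (idPM n)).ConnectedComponent) :
    0 < len η K := by
  have hfix : (cperm η ^ orderOf (cperm η)) (basep η K) = basep η K := by
    rw [pow_orderOf_eq_one]; rfl
  have hp : Function.IsPeriodicPt ⇑(cperm η) (orderOf (cperm η)) (basep η K) := by
    simpa only [Function.IsPeriodicPt, Function.IsFixedPt, Equiv.Perm.iterate_eq_pow] using hfix
  exact hp.minimalPeriod_pos (orderOf_pos _)

lemma len_fix (η : PM n) (K : (matchGraph η (idPM n)).ConnectedComponent) :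
    ((cperm η) ^ ((len η K : ℤ))) (basep η K) = basep η K := by
  have h := Function.iterate_minimalPeriod (f := ⇑(cperm η)) (x := basep η K)
  rw [Equiv.Perm.iterate_eq_pow] at h
  rw [zpow_natCast]
  exact h

lemma zmod_red (η : PM n) (K : (matchGraph η (idPM n)).ConnectedComponent) (m : ℤ) :
    haveI : NeZero (len η K) := ⟨(len_pos η K).ne'⟩
    ((cperm η) ^ m) (basep η K)
      = ((cperm η) ^ (((m : ZMod (len η K)).val : ℕ) : ℤ)) (basep η K) := by
  haveI : NeZero (len η K) := ⟨(len_pos η K).ne'⟩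
  set r : ℕ := (m : ZMod (len η K)).val with hr
  have hcast : ((r : ℤ) : ZMod (len η K)) = (m : ZMod (len η K)) := by
    push_cast
    rw [hr]
    simp [ZMod.natCast_val, ZMod.cast_id]
  have hdvd : ((len η K : ℕ) : ℤ) ∣ (m - r) := by
    rw [← ZMod.intCast_zmod_eq_zero_iff_dvd]
    push_cast
    push_cast at hcast
    rw [hcast]
    ring
  obtain ⟨q, hq⟩ := hdvd
  have hsplit : m = (r : ℤ) + (len η K : ℤ) * q := by omega
  rw [hsplit, ← zpow_zpow_apply]
  congr 1
  rw [zpow_mul, zpow_natCast]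
  exact zfix _ (by rw [← zpow_natCast]; exact len_fix η K) q

/-- The point of the component with "coordinates" `(j, ε)`. -/
def cpt (η : PM n) (K : (matchGraph η (idPM n)).ConnectedComponent)
    (p : ZMod (len η K) × Bool) : Fin n × Bool :=
  cond p.2 (iot n (((cperm η) ^ ((p.1.val : ℕ) : ℤ)) (basep η K)))
    (((cperm η) ^ ((p.1.val : ℕ) : ℤ)) (basep η K))

lemma cpt_int (η : PM n) (K : (matchGraph η (idPM n)).ConnectedComponent)
    (m : ℤ) (ε : Bool) :
    haveI : NeZero (len η K) := ⟨(len_pos η K).ne'⟩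
    cpt η K ((m : ZMod (len η K)), ε)
      = cond ε (iot n (((cperm η) ^ m) (basep η K))) (((cperm η) ^ m) (basep η K)) := by
  haveI : NeZero (len η K) := ⟨(len_pos η K).ne'⟩
  unfold cpt
  rw [← zmod_red]

lemma cpt_mem (η : PM n) (K : (matchGraph η (idPM n)).ConnectedComponent)
    (p : ZMod (len η K) × Bool) :
    (matchGraph η (idPM n)).connectedComponentMk (cpt η K p) = K := by
  have hreach : (matchGraph η (idPM n)).Reachable (basep η K) (cpt η K p) := by
    unfold cpt
    cases p.2 with
    | false => exact reach_zpow η _ _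
    | true => exact (reach_zpow η _ _).trans (reach_iot η _)
  exact (SimpleGraph.ConnectedComponent.sound hreach.symm).trans (basep_spec η K)

lemma cpt_inj (η : PM n) (K : (matchGraph η (idPM n)).ConnectedComponent) :
    Function.Injective (cpt η K) := by
  haveI : NeZero (len η K) := ⟨(len_pos η K).ne'⟩
  have hpowinj : ∀ a b : ZMod (len η K),
      ((cperm η) ^ ((a.val : ℕ) : ℤ)) (basep η K)
        = ((cperm η) ^ ((b.val : ℕ) : ℤ)) (basep η K) → a = b := by
    intro a b hab
    have hab2 : (cperm η ^ (a.val : ℕ)) (basep η K) = (cperm η ^ (b.val : ℕ)) (basep η K) := by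
      rw [← zpow_natCast, ← zpow_natCast]
      exact hab
    have := Function.iterate_injOn_Iio_minimalPeriod
      (f := ⇑(cperm η)) (x := basep η K)
      (Set.mem_Iio.2 (ZMod.val_lt a)) (Set.mem_Iio.2 (ZMod.val_lt b))
      (by simpa only [Equiv.Perm.iterate_eq_pow] using hab2)
    calc a = ((a.val : ℕ) : ZMod (len η K)) := by simp [ZMod.natCast_val, ZMod.cast_id]
      _ = ((b.val : ℕ) : ZMod (len η K)) := by rw [this]
      _ = b := by simp [ZMod.natCast_val, ZMod.cast_id]
  rintro ⟨a, ea⟩ ⟨b, eb⟩ hab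
  unfold cpt at hab
  cases ea <;> cases eb <;> simp only [cond] at hab
  · exact Prod.ext (hpowinj a b hab) rfl
  · -- a false, b true : c^a base = iot (c^b base)
    exfalso
    have : ((cperm η) ^ ((a.val : ℕ) : ℤ) * ((cperm η) ^ ((b.val : ℕ) : ℤ))⁻¹)
        (((cperm η) ^ ((b.val : ℕ) : ℤ)) (basep η K))
        = iot n (((cperm η) ^ ((b.val : ℕ) : ℤ)) (basep η K)) := by
      simp only [Equiv.Perm.mul_apply, Equiv.Perm.coe_inv, Equiv.symm_apply_apply]
      exact hab
    rw [← zpow_neg, ← zpow_add] at this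
    exact iot_not_on_orbit η _ _ this
  · exfalso
    have : ((cperm η) ^ ((b.val : ℕ) : ℤ) * ((cperm η) ^ ((a.val : ℕ) : ℤ))⁻¹)
        (((cperm η) ^ ((a.val : ℕ) : ℤ)) (basep η K))
        = iot n (((cperm η) ^ ((a.val : ℕ) : ℤ)) (basep η K)) := by
      simp only [Equiv.Perm.mul_apply, Equiv.Perm.coe_inv, Equiv.symm_apply_apply]
      exact hab.symm
    rw [← zpow_neg, ← zpow_add] at this
    exact iot_not_on_orbit η _ _ this
  · exact Prod.ext (hpowinj a b ((iot n).injective hab)) rfl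

lemma cpt_surj (η : PM n) (K : (matchGraph η (idPM n)).ConnectedComponent)
    (y : Fin n × Bool) (hy : (matchGraph η (idPM n)).connectedComponentMk y = K) :
    ∃ p, cpt η K p = y := by
  haveI : NeZero (len η K) := ⟨(len_pos η K).ne'⟩
  have hreach : (matchGraph η (idPM n)).Reachable (basep η K) y :=
    SimpleGraph.ConnectedComponent.exact ((basep_spec η K).trans hy.symm)
  obtain ⟨m, hm | hm⟩ := mem_orbit_of_reachable η hreach
  · exact ⟨((m : ZMod (len η K)), false), by rw [cpt_int]; exact hm.symm⟩
  · exact ⟨((m : ZMod (len η K)), true), by rw [cpt_int]; exact hm.symm⟩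

/-- The coordinate chart of a component. -/
def fibE (η : PM n) (K : (matchGraph η (idPM n)).ConnectedComponent) :
    (ZMod (len η K) × Bool) ≃ {y // (matchGraph η (idPM n)).connectedComponentMk y = K} :=
  Equiv.ofBijective (fun p => ⟨cpt η K p, cpt_mem η K p⟩)
    ⟨fun a b hab => cpt_inj η K (congrArg Subtype.val hab),
     fun ⟨y, hy⟩ => by
       obtain ⟨p, hp⟩ := cpt_surj η K y hy
       exact ⟨p, Subtype.ext hp⟩⟩

lemma fibE_val (η : PM n) (K : (matchGraph η (idPM n)).ConnectedComponent)
    (p : ZMod (len η K) × Bool) : (fibE η K p).1 = cpt η K p := rfl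

lemma card_fiber (η : PM n) (K : (matchGraph η (idPM n)).ConnectedComponent) :
    Nat.card K.supp = 2 * len η K := by
  haveI : NeZero (len η K) := ⟨(len_pos η K).ne'⟩
  have h1 : Nat.card K.supp
      = Nat.card {y // (matchGraph η (idPM n)).connectedComponentMk y = K} :=
    Nat.card_congr (Equiv.subtypeEquivRight fun v =>
      SimpleGraph.ConnectedComponent.mem_supp_iff K v)
  rw [h1, ← Nat.card_congr (fibE η K)]
  rw [Nat.card_eq_fintype_card, Fintype.card_prod, ZMod.card, Fintype.card_bool]
  ring

end Fib
section Match
variable {n : ℕ}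

lemma zmod_cast_pair {a b : ℕ} (h : (ZMod a × Bool) = (ZMod b × Bool)) (hab : a = b)
    (m : ℤ) (ε : Bool) : Equiv.cast h ((m : ZMod a), ε) = ((m : ZMod b), ε) := by
  subst hab
  rfl

lemma filter_card_count {α : Type*} [Fintype α] (f : α → ℕ) (v : ℕ) :
    (Finset.univ.filter (fun K => f K = v)).card
      = Multiset.count v (Multiset.map f Finset.univ.val) := by
  rw [Multiset.count_map]
  have h1 : (Finset.univ.filter (fun K => f K = v)).card
      = Multiset.card (Multiset.filter (fun K => f K = v) Finset.univ.val) := by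
    rw [← Finset.filter_val]
    rfl
  rw [h1]
  congr 1
  exact Multiset.filter_congr (fun a _ => ⟨Eq.symm, Eq.symm⟩)

lemma exists_conj (η η' : PM n) (hpart : partitionOf η = partitionOf η') :
    ∃ g : Equiv.Perm (Fin n × Bool),
      (∀ x, g (iot n x) = iot n (g x)) ∧ conjPM g η = η' := by
  letI F1 : Fintype ((matchGraph η (idPM n)).ConnectedComponent) := Fintype.ofFinite _
  letI F2 : Fintype ((matchGraph η' (idPM n)).ConnectedComponent) := Fintype.ofFinite _
  -- step 1 : equal multisets of halved component sizes
  have hmul : Multiset.map (fun K => Nat.card K.supp / 2)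
        (Finset.univ : Finset ((matchGraph η (idPM n)).ConnectedComponent)).val
      = Multiset.map (fun K => Nat.card K.supp / 2)
        (Finset.univ : Finset ((matchGraph η' (idPM n)).ConnectedComponent)).val := by
    unfold partitionOf at hpart
    have h1 := congrArg List.reverse hpart
    rw [List.reverse_reverse, List.reverse_reverse] at h1
    have h2 := congrArg (fun l : List ℕ => (l : Multiset ℕ)) h1
    simpa only [Multiset.sort_eq] using h2
  have hlenmul : Multiset.map (fun K => len η K)
        (Finset.univ : Finset ((matchGraph η (idPM n)).ConnectedComponent)).val
      = Multiset.map (fun K => len η' K)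
        (Finset.univ : Finset ((matchGraph η' (idPM n)).ConnectedComponent)).val := by
    have e1 : ∀ K : (matchGraph η (idPM n)).ConnectedComponent,
        Nat.card K.supp / 2 = len η K := fun K => by rw [card_fiber]; omega
    have e2 : ∀ K : (matchGraph η' (idPM n)).ConnectedComponent,
        Nat.card K.supp / 2 = len η' K := fun K => by rw [card_fiber]; omega
    calc Multiset.map (fun K => len η K) Finset.univ.val
        = Multiset.map (fun K => Nat.card K.supp / 2) Finset.univ.val :=
          Multiset.map_congr rfl (fun K _ => (e1 K).symm)
      _ = Multiset.map (fun K => Nat.card K.supp / 2) Finset.univ.val := hmul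
      _ = Multiset.map (fun K => len η' K) Finset.univ.val :=
          Multiset.map_congr rfl (fun K _ => e2 K)
  have hcard : ∀ v : ℕ,
      Fintype.card {K : (matchGraph η (idPM n)).ConnectedComponent // len η K = v}
        = Fintype.card {K' : (matchGraph η' (idPM n)).ConnectedComponent // len η' K' = v} := by
    intro v
    rw [Fintype.card_subtype, Fintype.card_subtype, filter_card_count, filter_card_count,
      hlenmul]
  -- step 2 : a length-preserving bijection between the components
  let fe : ∀ v : ℕ, {K : (matchGraph η (idPM n)).ConnectedComponent // len η K = v}
      ≃ {K' : (matchGraph η' (idPM n)).ConnectedComponent // len η' K' = v} :=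
    fun v => Fintype.equivOfCardEq (hcard v)
  let e := Equiv.ofFiberEquiv fe
  have hlen : ∀ K, len η' (e K) = len η K := fun K => Equiv.ofFiberEquiv_map fe K
  -- step 3 : the global permutation
  let Ψ₁ : (Σ K : (matchGraph η (idPM n)).ConnectedComponent, ZMod (len η K) × Bool)
      ≃ (Fin n × Bool) :=
    (Equiv.sigmaCongrRight (fibE η)).trans
      (Equiv.sigmaFiberEquiv ((matchGraph η (idPM n)).connectedComponentMk))
  let Ψ₂ : (Σ K' : (matchGraph η' (idPM n)).ConnectedComponent, ZMod (len η' K') × Bool)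
      ≃ (Fin n × Bool) :=
    (Equiv.sigmaCongrRight (fibE η')).trans
      (Equiv.sigmaFiberEquiv ((matchGraph η' (idPM n)).connectedComponentMk))
  let R : (Σ K : (matchGraph η (idPM n)).ConnectedComponent, ZMod (len η K) × Bool)
      ≃ (Σ K' : (matchGraph η' (idPM n)).ConnectedComponent, ZMod (len η' K') × Bool) :=
    Equiv.sigmaCongr e (fun K => Equiv.cast (by rw [hlen K]))
  let g : Equiv.Perm (Fin n × Bool) := (Ψ₁.symm.trans R).trans Ψ₂
  have hΨ₁ : ∀ K p, Ψ₁ ⟨K, p⟩ = cpt η K p := fun K p => rfl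
  have hΨ₂ : ∀ K' p, Ψ₂ ⟨K', p⟩ = cpt η' K' p := fun K' p => rfl
  -- the master computation
  have master : ∀ (K : (matchGraph η (idPM n)).ConnectedComponent) (m : ℤ) (ε : Bool),
      g (cond ε (iot n (((cperm η) ^ m) (basep η K))) (((cperm η) ^ m) (basep η K)))
        = cond ε (iot n (((cperm η') ^ m) (basep η' (e K))))
            (((cperm η') ^ m) (basep η' (e K))) := by
    intro K m ε
    have hx : cond ε (iot n (((cperm η) ^ m) (basep η K))) (((cperm η) ^ m) (basep η K))
        = Ψ₁ ⟨K, ((m : ZMod (len η K)), ε)⟩ := by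
      rw [hΨ₁, cpt_int]
    rw [hx]
    show Ψ₂ (R (Ψ₁.symm (Ψ₁ _))) = _
    rw [Equiv.symm_apply_apply]
    have hR : R ⟨K, ((m : ZMod (len η K)), ε)⟩
        = ⟨e K, ((m : ZMod (len η' (e K))), ε)⟩ := by
      show (⟨e K, Equiv.cast _ ((m : ZMod (len η K)), ε)⟩ :
        Σ K', ZMod (len η' K') × Bool) = _
      rw [zmod_cast_pair _ (hlen K).symm]
    rw [hR, hΨ₂, cpt_int]
  -- representing an arbitrary point
  have hrep : ∀ x : Fin n × Bool,
      ∃ (K : (matchGraph η (idPM n)).ConnectedComponent) (m : ℤ) (ε : Bool),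
        x = cond ε (iot n (((cperm η) ^ m) (basep η K))) (((cperm η) ^ m) (basep η K)) := by
    intro x
    set K := (matchGraph η (idPM n)).connectedComponentMk x with hK
    have hreach : (matchGraph η (idPM n)).Reachable (basep η K) x :=
      SimpleGraph.ConnectedComponent.exact (basep_spec η K)
    obtain ⟨m, hm | hm⟩ := mem_orbit_of_reachable η hreach
    · exact ⟨K, m, false, hm⟩
    · exact ⟨K, m, true, hm⟩
  have hcomm : ∀ x, g (iot n x) = iot n (g x) := by
    intro x
    obtain ⟨K, m, ε, rfl⟩ := hrep x
    cases ε with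
    | false =>
      have h1 := master K m true
      have h2 := master K m false
      simp only [cond] at h1 h2 ⊢
      rw [h1, h2]
    | true =>
      have h1 := master K m true
      have h2 := master K m false
      simp only [cond] at h1 h2 ⊢
      rw [iot_invol, h2, h1, iot_invol]
  have hconj : ∀ x, g (η.1 x) = η'.1 (g x) := by
    intro x
    obtain ⟨K, m, ε, rfl⟩ := hrep x
    cases ε with
    | false =>
      have h1 := master K (m - 1) true
      have h2 := master K m false
      simp only [cond] at h1 h2 ⊢
      rw [eta_zpow_apply, h1, h2, eta_zpow_apply]
    | true =>
      have h1 := master K (m + 1) false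
      have h2 := master K m true
      simp only [cond] at h1 h2 ⊢
      rw [eta_iot_zpow_apply, h1, h2, eta_iot_zpow_apply]
  refine ⟨g, hcomm, ?_⟩
  apply Subtype.ext
  apply Equiv.ext
  intro y
  show g (η.1 (g⁻¹ y)) = η'.1 y
  rw [hconj (g⁻¹ y)]
  congr 1
  exact g.apply_symm_apply y

end Match
section Final

lemma pmLaw_eq_of_partition {n k : ℕ} (t : ℕ) (x y : PM n)
    (h : partitionOf x = partitionOf y) :
    pmLaw n k (idPM n) t x = pmLaw n k (idPM n) t y := by
  obtain ⟨g, hgι, hgη⟩ := exists_conj x y h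
  have hid : conjPM g (idPM n) = idPM n := by
    apply Subtype.ext
    apply Equiv.ext
    intro z
    show g ((idPM n).1 (g⁻¹ z)) = (idPM n).1 z
    calc g ((idPM n).1 (g⁻¹ z)) = g (iot n (g⁻¹ z)) := rfl
      _ = iot n (g (g⁻¹ z)) := hgι (g⁻¹ z)
      _ = iot n z := by rw [show g (g⁻¹ z) = z from g.apply_symm_apply z]
      _ = (idPM n).1 z := rfl
  calc pmLaw n k (idPM n) t x
      = pmLaw n k (conjPM g (idPM n)) t (conjPM g x) := (pmLaw_conj g k (idPM n) t x).symm
    _ = pmLaw n k (idPM n) t y := by rw [hid, hgη]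

end Final

/-- the projection of the `k`-PM random walk onto its integer partition
is total-variation preserving. -/
theorem tv_projection_partition (n k : ℕ) (h2 : 2 ≤ k) (hkn : k ≤ n) (t : ℕ) :
    TV (pmLaw n k (idPM n) t) (unifPM n)
      = TV (push partitionOf (pmLaw n k (idPM n) t)) (push partitionOf (unifPM n)) := by
  apply TV_push_eq
  intro x y hxy
  have h1 : pmLaw n k (idPM n) t x = pmLaw n k (idPM n) t y :=
    pmLaw_eq_of_partition t x y hxy
  have h2 : unifPM n x = unifPM n y := rfl
  rw [h1, h2]

end
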